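/- Let V ∈ ℝ^{d×k} and V_⊥ ∈ ℝ^{d×(d−k)} be matrices such that the concatenation [V | V_⊥] is a d×d orthogonal matrix, let D ∈ ℝ^{n×d}, and set ε* = DV ∈ ℝ^{n×k}. Then for every ε ∈ ℝ^{n×k}: ‖D − εVᵀ‖_F² ≤ 2 Σ_i σ_i(D V_⊥)² + 2‖ε − ε*‖_F², where σ_i(D V_⊥) are the singular values of D V_⊥. In particular, ‖(ε − ε*)Vᵀ‖_F = ‖ε − ε*‖_F since V has orthonormal columns. -/

import Mathlib

open Matrix Finset

/-- Squared Frobenius norm of a real matrix: `‖M‖_F² = ∑_{i,j} M_{ij}²`. -/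
noncomputable def frobSq {m n : Type*} [Fintype m] [Fintype n] (M : Matrix m n ℝ) : ℝ :=
  ∑ i, ∑ j, (M i j) ^ 2

/-- Frobenius norm of a real matrix: `‖M‖_F = sqrt (∑_{i,j} M_{ij}²)`. -/
noncomputable def frobNorm {m n : Type*} [Fintype m] [Fintype n] (M : Matrix m n ℝ) : ℝ :=
  Real.sqrt (frobSq M)

/-- The singular values of a real matrix `M`: the nonnegative square roots of the
eigenvalues of `MᵀM` (indexed by the column index type). -/
noncomputable def singularValues {m n : Type*} [Fintype m] [Fintype n] [DecidableEq n]
    (M : Matrix m n ℝ) : n → ℝ :=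
  fun i => Real.sqrt ((Matrix.isHermitian_conjTranspose_mul_self M).eigenvalues i)

/-!
Since `[V | V⊥]` is orthogonal, `D = D V Vᵀ + D V⊥ V⊥ᵀ`, so
`D − ε Vᵀ = (D V − ε) Vᵀ + (D V⊥) V⊥ᵀ`. Right multiplication by the transpose of a matrix
with orthonormal columns preserves the Frobenius norm, and `‖A + B‖² ≤ 2‖A‖² + 2‖B‖²`;
finally `∑ᵢ σᵢ(M)² = tr (MᵀM) = ‖M‖_F²`.
-/

section FrobSq

variable {m n p : Type*} [Fintype m] [Fintype n] [Fintype p]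

lemma frobSq_eq_trace (M : Matrix m n ℝ) : frobSq M = (Mᵀ * M).trace := by
  simp only [frobSq, trace, Matrix.diag, mul_apply, transpose_apply]
  rw [Finset.sum_comm]
  simp [sq]

lemma frobSq_sub_comm (A B : Matrix m n ℝ) : frobSq (A - B) = frobSq (B - A) := by
  rw [← neg_sub]
  simp only [frobSq, Matrix.neg_apply, neg_sq]

lemma frobSq_add_le (A B : Matrix m n ℝ) :
    frobSq (A + B) ≤ 2 * frobSq A + 2 * frobSq B := by
  simp only [frobSq, Finset.mul_sum, ← Finset.sum_add_distrib]
  gcongr with i _ j _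
  rw [Matrix.add_apply]
  nlinarith [sq_nonneg (A i j - B i j)]

lemma frobSq_mul_transpose_of_transpose_mul_self_eq_one [DecidableEq n]
    (M : Matrix m n ℝ) {B : Matrix p n ℝ} (hB : Bᵀ * B = 1) :
    frobSq (M * Bᵀ) = frobSq M := by
  rw [frobSq_eq_trace, frobSq_eq_trace, transpose_mul, transpose_transpose, Matrix.mul_assoc,
    trace_mul_comm, Matrix.mul_assoc, Matrix.mul_assoc, hB, Matrix.mul_one]

lemma sum_singularValues_sq [DecidableEq n] (M : Matrix m n ℝ) :
    ∑ i, singularValues M i ^ 2 = frobSq M := by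
  have hM := isHermitian_conjTranspose_mul_self M
  rw [frobSq_eq_trace, ← conjTranspose_eq_transpose_of_trivial,
    hM.trace_eq_sum_eigenvalues]
  refine Finset.sum_congr rfl fun i _ => ?_
  rw [singularValues, Real.sq_sqrt (eigenvalues_conjTranspose_mul_self_nonneg M i)]
  rfl

end FrobSq

section Orthogonal

variable {d k l : Type*} [Fintype d] [DecidableEq k] [DecidableEq l]

lemma transpose_mul_self_eq_one_of_fromCols {V : Matrix d k ℝ} {W : Matrix d l ℝ}
    (h : (fromCols V W)ᵀ * fromCols V W = 1) : Vᵀ * V = 1 ∧ Wᵀ * W = 1 := by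
  rw [transpose_fromCols, fromRows_mul_fromCols, ← fromBlocks_one, fromBlocks_inj] at h
  exact ⟨h.1, h.2.2.2⟩

lemma frobSq_sub_mul_transpose_le {m : Type*} [Fintype m] [Fintype k] [Fintype l]
    [DecidableEq d] (D : Matrix m d ℝ) {V : Matrix d k ℝ} {W : Matrix d l ℝ}
    (hV : Vᵀ * V = 1) (hW : Wᵀ * W = 1) (hVW : V * Vᵀ + W * Wᵀ = 1) (ε : Matrix m k ℝ) :
    frobSq (D - ε * Vᵀ) ≤ 2 * frobSq (D * W) + 2 * frobSq (ε - D * V) := by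
  have hsplit : D - ε * Vᵀ = (D * V - ε) * Vᵀ + D * W * Wᵀ := by
    conv_lhs => rw [← Matrix.mul_one D, ← hVW]
    simp only [Matrix.mul_add, Matrix.sub_mul, Matrix.mul_assoc]
    abel
  calc frobSq (D - ε * Vᵀ)
      ≤ 2 * frobSq ((D * V - ε) * Vᵀ) + 2 * frobSq (D * W * Wᵀ) := hsplit ▸ frobSq_add_le _ _
    _ = 2 * frobSq (D * W) + 2 * frobSq (ε - D * V) := by
      rw [frobSq_mul_transpose_of_transpose_mul_self_eq_one _ hV,
        frobSq_mul_transpose_of_transpose_mul_self_eq_one _ hW, frobSq_sub_comm]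
      ring

end Orthogonal

/-- **Deterministic core of the bound (2) in Theorem 2.** Let `[V | V⊥]` be a `d × d`
orthogonal matrix, `D ∈ ℝ^{n×d}` and `ε* = DV`. Then for every `ε ∈ ℝ^{n×k}`,
`‖D − εVᵀ‖_F² ≤ 2 ∑ᵢ σᵢ(D V⊥)² + 2‖ε − ε*‖_F²`, where `σᵢ(D V⊥)` are the singular
values of `D V⊥`. In particular `‖(ε − ε*)Vᵀ‖_F = ‖ε − ε*‖_F` since `V` has orthonormal
columns. -/
theorem subspace_error_decomposition (n d k : ℕ)
    (V : Matrix (Fin d) (Fin k) ℝ) (Vperp : Matrix (Fin d) (Fin (d - k)) ℝ)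
    (horth : (fromCols V Vperp)ᵀ * fromCols V Vperp = 1)
    (horth' : fromCols V Vperp * (fromCols V Vperp)ᵀ = 1)
    (D : Matrix (Fin n) (Fin d) ℝ) :
    (∀ ε : Matrix (Fin n) (Fin k) ℝ,
      frobSq (D - ε * Vᵀ) ≤
        2 * (∑ i, singularValues (D * Vperp) i ^ 2) + 2 * frobSq (ε - D * V)) ∧
    (∀ ε : Matrix (Fin n) (Fin k) ℝ,
      frobNorm ((ε - D * V) * Vᵀ) = frobNorm (ε - D * V)) := by
  obtain ⟨hV, hVperp⟩ := transpose_mul_self_eq_one_of_fromCols horth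
  have hsum : V * Vᵀ + Vperp * Vperpᵀ = 1 := by
    rwa [transpose_fromCols, fromCols_mul_fromRows] at horth'
  refine ⟨fun ε => ?_, fun ε => ?_⟩
  · rw [sum_singularValues_sq]
    exact frobSq_sub_mul_transpose_le D hV hVperp hsum ε
  · rw [frobNorm, frobNorm, frobSq_mul_transpose_of_transpose_mul_self_eq_one _ hV]
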